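/- For positive integers r, s, k with 1 ≤ k ≤ r+s+1, the identity ((r+1)!·s!/(r+s+1))·B(r+s+1, s, k) = (r!·(s+1)!/(r+s+1))·B(r+s+1, s+1, k) + (r-s)·(r!·s!/(r+s))·B(r+s, s, k) holds, where B(n,p,k) = (n/k)·Σ_{j≥0} C(p,j)·C(n-p,j)·C(n-j-1,k-j-1). -/

import Mathlib

open Finset

/-- Binomial coefficient `C(a,b)` for integers, with `C(a,b) = 0` unless `0 ≤ b ≤ a`. -/
def C (a b : ℤ) : ℚ := if 0 ≤ b ∧ b ≤ a then (Nat.choose a.toNat b.toNat : ℚ) else 0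

/-- `B(n,p,k) = (n/k) · Σ_{r≥0} C(p,r)·C(n-p,r)·C(n-r-1,k-r-1)`. -/
def B (n p k : ℕ) : ℚ :=
  ((n : ℚ) / k) * ∑ r ∈ range (n + 1),
    C p r * C ((n : ℤ) - p) r * C ((n : ℤ) - r - 1) ((k : ℤ) - r - 1)

/-!
With `T p q k = ∑ⱼ C(p,j) C(q,j) C(p+q-j-1, k-j-1)` one has
`B (p + q) p k = (p + q) / k * T p q k`, and the theorem is the recurrence
`(q + 1) T(p, q+1) = (p + 1) T(p+1, q) + (q - p) T(p, q)` at `p = s`, `q = r`, multiplied by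
`r! s! / k`. Expanding `C(p+1,j)`, `C(q+1,j)` and `C(p+q-j, k-j-1)` by Pascal's rule and using
absorption `j C(n,j) = (n-j+1) C(n,j-1)`, the `j`-th term of
`(q+1) T(p,q+1) - (p+1) T(p+1,q) - (q-p) T(p,q)` becomes `g(j+1) - g(j)` with
`g(j) = (q-p) C(p,j-1) C(q,j-1) C(p+q-j, k-j-1)`, so the sum telescopes to `0`.
-/

lemma C_of_neg {a b : ℤ} (hb : b < 0) : C a b = 0 := by
  simp [C]; omega

lemma C_of_lt {a b : ℤ} (h : a < b) : C a b = 0 := by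
  simp [C]; omega

lemma C_natCast (n m : ℕ) : C n m = n.choose m := by
  unfold C
  split_ifs with h
  · simp
  · rw [Nat.choose_eq_zero_of_lt (by omega), Nat.cast_zero]

lemma C_add_one {a : ℤ} (ha : 0 ≤ a) (b : ℤ) : C (a + 1) b = C a b + C a (b - 1) := by
  lift a to ℕ using ha
  obtain hb | ⟨m, rfl⟩ : b < 0 ∨ ∃ m : ℕ, b = m := by
    rcases le_or_gt 0 b with h | h
    · exact .inr ⟨b.toNat, by omega⟩
    · exact .inl h
  · rw [C_of_neg hb, C_of_neg hb, C_of_neg (by omega), add_zero]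
  · cases m with
    | zero => simp [C]; omega
    | succ m =>
      rw [Nat.cast_succ m, add_sub_cancel_right, ← Nat.cast_succ a, ← Nat.cast_succ m,
        C_natCast, C_natCast, C_natCast, Nat.choose_succ_succ', Nat.cast_add, add_comm]

lemma mul_C_eq_mul_C_sub_one (n : ℕ) (j : ℤ) :
    (j : ℚ) * C n j = (n - j + 1) * C n (j - 1) := by
  obtain hj | ⟨m, rfl⟩ : j ≤ 0 ∨ ∃ m : ℕ, j = m + 1 := by
    rcases le_or_gt j 0 with h | h
    · exact .inl h
    · exact .inr ⟨(j - 1).toNat, by omega⟩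
  · rw [C_of_neg (by omega : j - 1 < 0), mul_zero]
    rcases hj.lt_or_eq with hj | rfl
    · rw [C_of_neg hj, mul_zero]
    · simp
  · rw [add_sub_cancel_right, ← Nat.cast_succ, C_natCast, C_natCast]
    push_cast
    rcases le_or_gt m n with hmn | hmn
    · have key := congrArg (Nat.cast (R := ℚ)) (Nat.choose_succ_right_eq n m)
      push_cast [Nat.cast_sub hmn] at key
      linear_combination key
    · simp [Nat.choose_eq_zero_of_lt hmn, Nat.choose_eq_zero_of_lt (Nat.lt_succ_of_lt hmn)]

lemma C_cross_absorption (p q : ℕ) (x : ℤ) :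
    (q + 1) * (C p x * C q (x - 1)) - (p + 1) * (C p (x - 1) * C q x) =
      (p - q) * (C p (x - 1) * C q (x - 1)) := by
  rcases le_or_gt x 0 with hx | hx
  · simp [C_of_neg (by omega : x - 1 < 0)]
  · have hx : (x : ℚ) ≠ 0 := by positivity
    apply mul_left_cancel₀ hx
    linear_combination (q + 1) * C q (x - 1) * mul_C_eq_mul_C_sub_one p x -
      (p + 1) * C p (x - 1) * mul_C_eq_mul_C_sub_one q x

def T (p q k : ℕ) : ℚ :=
  ∑ j ∈ range (p + q + 1), C p j * C q j * C (p + q - j - 1) (k - j - 1)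

lemma B_add_eq (p q k : ℕ) : B (p + q) p k = (p + q) / k * T p q k := by
  simp only [B, T]
  push_cast
  simp only [add_sub_cancel_left]

lemma T_summand_telescopes (p q k : ℕ) (x : ℤ) :
    (q + 1) * (C p x * C (q + 1) x * C (p + q - x) (k - x - 1))
      - (p + 1) * (C (p + 1) x * C q x * C (p + q - x) (k - x - 1))
      - (q - p) * (C p x * C q x * C (p + q - x - 1) (k - x - 1)) =
    (q - p) * (C p x * C q x * C (p + q - x - 1) (k - x - 2))
      - (q - p) * (C p (x - 1) * C q (x - 1) * C (p + q - x) (k - x - 1)) := by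
  have hpascal : (q - p : ℚ) * (C p x * C q x) *
      (C (p + q - x) (k - x - 1) - C (p + q - x - 1) (k - x - 1) - C (p + q - x - 1) (k - x - 2))
      = 0 := by
    -- Pascal's rule needs `x < p + q`; otherwise one of the other factors vanishes.
    rcases (by omega : x < p + q ∨ p < x ∨ q < x ∨ p = q) with h | h | h | h
    · rw [← sub_add_cancel ((p : ℤ) + q - x) 1, C_add_one (by omega)]
      ring_nf
    · simp [C_of_lt h]
    · simp [C_of_lt h]
    · simp [h]
  rw [C_add_one (by omega : (0 : ℤ) ≤ p), C_add_one (by omega : (0 : ℤ) ≤ q)]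
  linear_combination hpascal + C (p + q - x) (k - x - 1) * C_cross_absorption p q x

theorem T_recurrence (p q k : ℕ) :
    (q + 1) * T p (q + 1) k = (p + 1) * T (p + 1) q k + (q - p) * T p q k := by
  set g : ℕ → ℚ := fun j ↦
    (q - p) * (C p (j - 1) * C q (j - 1) * C (p + q - j) (k - j - 1)) with hg
  have hT₁ : T p (q + 1) k =
      ∑ j ∈ range (p + q + 2), C p j * C (q + 1) j * C (p + q - j) (k - j - 1) := by
    simp only [T]; push_cast
    exact sum_congr (congrArg range (by omega)) fun j _ ↦ by congr 2; ring
  have hT₂ : T (p + 1) q k =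
      ∑ j ∈ range (p + q + 2), C (p + 1) j * C q j * C (p + q - j) (k - j - 1) := by
    simp only [T]; push_cast
    exact sum_congr (congrArg range (by omega)) fun j _ ↦ by congr 2; ring
  have hT₃ : T p q k =
      ∑ j ∈ range (p + q + 2), C p j * C q j * C (p + q - j - 1) (k - j - 1) := by
    rw [T, sum_range_succ _ (p + q + 1), C_of_lt (by omega : (p : ℤ) < (p + q + 1 : ℕ))]
    simp
  have htelescope : ∀ j ∈ range (p + q + 2),
      (q + 1) * (C p j * C (q + 1) j * C (p + q - j) (k - j - 1))
        - (p + 1) * (C (p + 1) j * C q j * C (p + q - j) (k - j - 1))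
        - (q - p) * (C p j * C q j * C (p + q - j - 1) (k - j - 1)) = g (j + 1) - g j := by
    intro j _
    rw [T_summand_telescopes, hg]
    push_cast
    ring_nf
  rw [← sub_eq_zero, ← sub_sub, hT₁, hT₂, hT₃, mul_sum, mul_sum, mul_sum, ← sum_sub_distrib,
    ← sum_sub_distrib, sum_congr rfl htelescope, sum_range_sub, hg]
  simp [C_of_neg, C_of_lt (by omega : (p : ℤ) < p + q + 2 - 1)]

theorem stmt_19_general (r s k : ℕ) (hr : 1 ≤ r) :
    ((Nat.factorial (r + 1) : ℚ) * Nat.factorial s / (r + s + 1)) * B (r + s + 1) s k =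
      ((Nat.factorial r : ℚ) * Nat.factorial (s + 1) / (r + s + 1)) * B (r + s + 1) (s + 1) k +
        ((r : ℚ) - s) * ((Nat.factorial r : ℚ) * Nat.factorial s / (r + s)) * B (r + s) s k := by
  have h₁ : B (r + s + 1) s k = (r + s + 1) / k * T s (r + 1) k := by
    rw [show r + s + 1 = s + (r + 1) by ring, B_add_eq]; push_cast; ring
  have h₂ : B (r + s + 1) (s + 1) k = (r + s + 1) / k * T (s + 1) r k := by
    rw [show r + s + 1 = s + 1 + r by ring, B_add_eq]; push_cast; ring
  have h₃ : B (r + s) s k = (r + s) / k * T s r k := by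
    rw [add_comm r s, B_add_eq, add_comm]
  have hn : (r + s + 1 : ℚ) ≠ 0 := by positivity
  have hm : (r + s : ℚ) ≠ 0 := by positivity
  rw [h₁, h₂, h₃, Nat.factorial_succ, Nat.factorial_succ]
  push_cast
  field_simp
  linear_combination (k : ℚ)⁻¹ * T_recurrence s r k

theorem stmt_19 (r s k : ℕ) (hr : 1 ≤ r) (hs : 1 ≤ s) (hk : 1 ≤ k)
    (hkrs : k ≤ r + s + 1) :
    ((Nat.factorial (r + 1) : ℚ) * Nat.factorial s / (r + s + 1)) * B (r + s + 1) s k =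
      ((Nat.factorial r : ℚ) * Nat.factorial (s + 1) / (r + s + 1)) * B (r + s + 1) (s + 1) k +
        ((r : ℚ) - s) * ((Nat.factorial r : ℚ) * Nat.factorial s / (r + s)) * B (r + s) s k :=
  stmt_19_general r s k hr
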